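/- Soundness of simplify: for every ASLD derivation D_S there is an SLD derivation D = simplify(D_S) using the same clauses and mgus, such that D has the same composed computed answer substitution as D_S and the final goal of D equals the final goal of D_S with all ↑ atoms removed. -/

import Mathlib

/-! Basic syntax of definite logic programs: first-order terms, atoms,
substitutions, most general unifiers and clauses. -/

abbrev Var := ℕ

inductive Tm : Type
  | var : Var → Tm
  | fn : ℕ → List Tm → Tm

abbrev Subst := Var → Tm

def Tm.subst (σ : Subst) : Tm → Tm
  | .var v => σ v
  | .fn f ts => .fn f (ts.attach.map fun t => Tm.subst σ t.1)
decreasing_by simp only [Tm.fn.sizeOf_spec]; have := List.sizeOf_lt_of_mem t.2; omega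

structure Atom where
  pred : ℕ
  args : List Tm

def Atom.subst (σ : Subst) (A : Atom) : Atom := ⟨A.pred, A.args.map (Tm.subst σ)⟩

/-- The identity substitution. -/
def idS : Subst := Tm.var

/-- Composition of substitutions: `(σ.comp τ) t = τ(σ(t))`. -/
def Subst.comp (σ τ : Subst) : Subst := fun v => Tm.subst τ (σ v)

def Unifies (θ : Subst) (A B : Atom) : Prop := A.subst θ = B.subst θ

/-- `θ` is a most general unifier of atoms `A` and `B`. -/
def IsMgu (θ : Subst) (A B : Atom) : Prop :=
  Unifies θ A B ∧ ∀ τ, Unifies τ A B → ∃ δ, ∀ v, τ v = Tm.subst δ (θ v)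

structure Clause where
  head : Atom
  body : List Atom

/-! ASLD resolution: goals are lists of items, where an item is either the
pop-mark `↑` or an atom annotated (as ghost information) with the list of its
ancestors, nearest ancestor first; ancestors are recorded in the instantiation
state they had when they were selected.  A state pairs a goal with the
ancestor stack (head = top of the stack). -/

inductive GItem : Type
  | pop : GItem
  | atom : Atom → List Atom → GItem

def GItem.isPop : GItem → Bool
  | .pop => true
  | _ => false

/-- Apply a substitution to the atom of an item (annotations, which are
snapshots, are left untouched). -/
def instG (θ : Subst) : GItem → GItem
  | .pop => .pop
  | .atom A anc => .atom (A.subst θ) anc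

structure AState where
  goal : List GItem
  stack : List Atom

/-- `Admissible wqo A AS`: no element of the sequence `AS` is `wqo`-below the
new atom `A`. -/
def Admissible (wqo : Atom → Atom → Prop) (A : Atom) (AS : List Atom) : Prop :=
  ∀ B ∈ AS, ¬ wqo B A

/-- ASLD resolution steps.  **derive** selects (via an arbitrary computation
rule) an atom `A` of the goal, provided the leftmost item of the goal is not a
`↑` mark and `A` is admissible w.r.t. the contents of the ancestor stack;
it replaces the goal by the instantiated clause body placed at the front,
followed by a `↑` mark and the instantiated remaining atoms, and pushes `A`
onto the stack.  **popDerive** applies when the leftmost item is `↑`: it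
removes the mark and pops the stack. -/
inductive AStep (P : List Clause) (wqo : Atom → Atom → Prop) : AState → AState → Prop
  | derive (pre post : List GItem) (A : Atom) (anc : List Atom) (C : Clause)
      (θ : Subst) (AS : List Atom)
      (hC : C ∈ P) (hmgu : IsMgu θ A C.head)
      (hleft : (pre ++ GItem.atom A anc :: post).head? ≠ some GItem.pop)
      (hadm : Admissible wqo A AS) :
      AStep P wqo ⟨pre ++ GItem.atom A anc :: post, AS⟩
        ⟨(C.body.map fun B => GItem.atom (B.subst θ) (A :: anc)) ++
            GItem.pop :: (pre ++ post).map (instG θ), A :: AS⟩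
  | popDerive (G : List GItem) (T : Atom) (AS : List Atom) :
      AStep P wqo ⟨GItem.pop :: G, T :: AS⟩ ⟨G, AS⟩

/-- The initial ASLD state for a query `Q`: all atoms have an empty ancestor
annotation and the stack is empty. -/
def initState (Q : List Atom) : AState :=
  ⟨Q.map fun A => GItem.atom A [], []⟩

/-- SLD goals with ghost ancestor annotations. -/
abbrev SGoal := List (Atom × List Atom)

def instA (θ : Subst) (x : Atom × List Atom) : Atom × List Atom :=
  (x.1.subst θ, x.2)

/-- Erasing the `↑` marks of an ASLD goal yields an SLD goal. -/
def eraseG (G : List GItem) : SGoal :=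
  G.filterMap fun i =>
    match i with
    | GItem.pop => none
    | GItem.atom A anc => some (A, anc)

/-- ASLD steps labeled by the clause and mgu used: derive steps carry
`some (C, θ)`, pop-derive steps carry `none` (they leave the substitution
unchanged). -/
inductive AStepL (P : List Clause) (wqo : Atom → Atom → Prop) :
    Option (Clause × Subst) → AState → AState → Prop
  | derive (pre post : List GItem) (A : Atom) (anc : List Atom) (C : Clause)
      (θ : Subst) (AS : List Atom)
      (hC : C ∈ P) (hmgu : IsMgu θ A C.head)
      (hleft : (pre ++ GItem.atom A anc :: post).head? ≠ some GItem.pop)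
      (hadm : Admissible wqo A AS) :
      AStepL P wqo (some (C, θ)) ⟨pre ++ GItem.atom A anc :: post, AS⟩
        ⟨(C.body.map fun B => GItem.atom (B.subst θ) (A :: anc)) ++
            GItem.pop :: (pre ++ post).map (instG θ), A :: AS⟩
  | popDerive (G : List GItem) (T : Atom) (AS : List Atom) :
      AStepL P wqo none ⟨GItem.pop :: G, T :: AS⟩ ⟨G, AS⟩

/-- SLD resolution steps (front placement) labeled by the clause and mgu used. -/
inductive SStepL (P : List Clause) : Clause × Subst → SGoal → SGoal → Prop
  | step (pre post : SGoal) (A : Atom) (anc : List Atom) (C : Clause) (θ : Subst)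
      (hC : C ∈ P) (hmgu : IsMgu θ A C.head) :
      SStepL P (C, θ) (pre ++ (A, anc) :: post)
        ((C.body.map fun B => (B.subst θ, A :: anc)) ++ (pre ++ post).map (instA θ))

/-- Labeled derivations: `Deriv Rl s ls s'` means there is a derivation from
`s` to `s'` whose successive steps carry the labels `ls`. -/
inductive Deriv {σ α : Type*} (Rl : α → σ → σ → Prop) : σ → List α → σ → Prop
  | nil (s : σ) : Deriv Rl s [] s
  | cons {s s' s'' : σ} {a : α} {as : List α} :
      Rl a s s' → Deriv Rl s' as s'' → Deriv Rl s (a :: as) s''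

/-- The composition `θ1 θ2 ... θn` of a list of substitutions. -/
def compSubst (ls : List Subst) : Subst := ls.foldl Subst.comp idS

/-! A pop-derive step changes neither the substitution nor the goal up to `↑` marks, and a
derive step, once the `↑` marks are erased, is an SLD step with the same clause and mgu.
Erasing the marks along an ASLD derivation and dropping its pop-derive steps therefore yields an
SLD derivation; its computed answer is unchanged since pop-derive steps contribute the identity,
which is neutral for composition. -/

section Substitution

lemma Tm.subst_idS : ∀ t, Tm.subst idS t = t
  | .var v => by rw [Tm.subst]; rfl
  | .fn f ts => by
    rw [Tm.subst]
    congr 1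
    calc ts.attach.map (fun t => Tm.subst idS t.1)
        = ts.attach.map (fun t => t.1) :=
          List.map_congr_left fun t _ => Tm.subst_idS t.1
      _ = ts := List.attach_map_subtype_val ts
decreasing_by have := List.sizeOf_lt_of_mem t.2; simp only [Tm.fn.sizeOf_spec]; omega

@[simp]
lemma Subst.comp_idS (σ : Subst) : σ.comp idS = σ :=
  funext fun v => Tm.subst_idS (σ v)

lemma foldl_comp_reduceOption (l : List (Option Subst)) (acc : Subst) :
    l.reduceOption.foldl Subst.comp acc = (l.map (·.getD idS)).foldl Subst.comp acc := by
  induction l generalizing acc with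
  | nil => rfl
  | cons o l ih => cases o <;> simp [ih]

lemma compSubst_reduceOption (l : List (Option Subst)) :
    compSubst l.reduceOption = compSubst (l.map (·.getD idS)) :=
  foldl_comp_reduceOption l idS

end Substitution

section Erasure

@[simp]
lemma eraseG_append (l₁ l₂ : List GItem) : eraseG (l₁ ++ l₂) = eraseG l₁ ++ eraseG l₂ :=
  List.filterMap_append

@[simp]
lemma eraseG_cons_atom (A : Atom) (anc : List Atom) (l : List GItem) :
    eraseG (GItem.atom A anc :: l) = (A, anc) :: eraseG l := rfl

@[simp]
lemma eraseG_cons_pop (l : List GItem) : eraseG (GItem.pop :: l) = eraseG l := rfl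

@[simp]
lemma eraseG_map_atom (l : List Atom) (f : Atom → Atom) (anc : List Atom) :
    eraseG (l.map fun B => GItem.atom (f B) anc) = l.map fun B => (f B, anc) := by
  induction l with
  | nil => rfl
  | cons B l ih => simp only [List.map_cons, eraseG_cons_atom, ih]

@[simp]
lemma eraseG_map_instG (θ : Subst) (l : List GItem) :
    eraseG (l.map (instG θ)) = (eraseG l).map (instA θ) := by
  induction l with
  | nil => rfl
  | cons i l ih =>
    cases i with
    | pop => simpa only [List.map_cons, instG, eraseG_cons_pop] using ih
    | atom A anc => simp only [List.map_cons, instG, eraseG_cons_atom, ih, instA]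

lemma eraseG_initState (Q : List Atom) :
    eraseG (initState Q).goal = Q.map fun A => (A, ([] : List Atom)) :=
  eraseG_map_atom Q id []

end Erasure

lemma Deriv.filterMap {σ τ α β : Type*} {Rl : α → σ → σ → Prop} {Sl : β → τ → τ → Prop}
    (f : α → Option β) (g : σ → τ)
    (hsome : ∀ {a b s s'}, f a = some b → Rl a s s' → Sl b (g s) (g s'))
    (hnone : ∀ {a s s'}, f a = none → Rl a s s' → g s = g s')
    {s s' : σ} {as : List α} (hD : Deriv Rl s as s') :
    Deriv Sl (g s) (as.filterMap f) (g s') := by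
  induction hD with
  | nil s => exact Deriv.nil _
  | @cons s s₁ s₂ a as hstep _ ih =>
    rcases hfa : f a with _ | b
    · rw [List.filterMap_cons_none hfa, hnone hfa hstep]
      exact ih
    · rw [List.filterMap_cons_some hfa]
      exact Deriv.cons (hsome hfa hstep) ih

section Simplify

variable {P : List Clause} {wqo : Atom → Atom → Prop} {s s' : AState}

lemma AStepL.eraseG_derive {cθ : Clause × Subst} (h : AStepL P wqo (some cθ) s s') :
    SStepL P cθ (eraseG s.goal) (eraseG s'.goal) := by
  cases h with
  | derive pre post A anc C θ AS hC hmgu =>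
    simpa using SStepL.step (eraseG pre) (eraseG post) A anc C θ hC hmgu

lemma AStepL.eraseG_popDerive (h : AStepL P wqo none s s') : eraseG s.goal = eraseG s'.goal := by
  cases h
  rfl

lemma Deriv.simplify {labels : List (Option (Clause × Subst))}
    (hD : Deriv (fun a => AStepL P wqo a) s labels s') :
    Deriv (fun a => SStepL P a) (eraseG s.goal) labels.reduceOption (eraseG s'.goal) :=
  hD.filterMap id (fun s => eraseG s.goal)
    (fun hab h => by subst hab; exact h.eraseG_derive)
    (fun ha h => by subst ha; exact h.eraseG_popDerive)

end Simplify

/-- Soundness of `simplify`: for every ASLD derivation `D_S` there is an SLD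
derivation `D = simplify(D_S)` using the same clauses and mgus (the labels of
`D_S` with the pop-derive steps, labeled `none`, removed), such that the final
goal of `D` equals the final goal of `D_S` with all `↑` atoms removed and `D`
has the same composed computed answer substitution as `D_S`. -/
theorem simplify_sound (P : List Clause) (wqo : Atom → Atom → Prop)
    (Q : List Atom) (labels : List (Option (Clause × Subst))) (s : AState)
    (hD : Deriv (fun a => AStepL P wqo a) (initState Q) labels s) :
    Deriv (fun a => SStepL P a) (Q.map fun A => (A, ([] : List Atom)))
        labels.reduceOption (eraseG s.goal) ∧
      compSubst (labels.reduceOption.map Prod.snd) =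
        compSubst (labels.map fun o => (o.map Prod.snd).getD idS) := by
  refine ⟨eraseG_initState Q ▸ hD.simplify, ?_⟩
  rw [← List.reduceOption_map, compSubst_reduceOption, List.map_map]
  rfl
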